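/- Let X be locally path connected and a strong H-SLT space at x₀, H ≤ π₁(X,x₀). Then H is open in the whisker topology on π₁(X,x₀) if and only if H is open in the lasso topology on π₁(X,x₀). -/

import Mathlib

open CategoryTheory unitInterval
open scoped Topology

attribute [local instance] Path.Homotopic.setoid

noncomputable section

/-- The homotopy class of a loop as an element of the fundamental group. -/
def loopClass {X : Type*} [TopologicalSpace X] {x : X} (γ : Path x x) :
    FundamentalGroup X x :=
  FundamentalGroup.fromPath
    (⟦γ⟧ : Path.Homotopic.Quotient x x)

variable {X : Type*} [TopologicalSpace X]

/-- The Spanier group of a family of subsets of `X`, based at `x`: the subgroup generated by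
classes `[α∗β∗α⁻¹]` where `α` is a path from `x` and `β` is a loop inside a member of `𝒰`. -/
def spanierGroupAt (x : X) (𝒰 : Set (Set X)) : Subgroup (FundamentalGroup X x) :=
  Subgroup.closure {g | ∃ (y : X) (α : Path x y) (β : Path y y) (U : Set X),
    U ∈ 𝒰 ∧ (∀ t, β t ∈ U) ∧ g = loopClass (α.trans (β.trans α.symm))}

/-- `𝒰` is an open cover of `X`. -/
def IsOpenCover (𝒰 : Set (Set X)) : Prop := (∀ U ∈ 𝒰, IsOpen U) ∧ ⋃₀ 𝒰 = Set.univ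

/-- `X` is a strong `H`-SLT space at `x₀`: for every `x ∈ X` and every open neighborhood `U`
of `x₀` there is an open neighborhood `V` of `x` such that for every loop `β` in `V` based at
`x` and every path `α` from `x₀` to `x` there is a loop `λ` in `U` based at `x₀` with
`[α∗β∗α⁻¹∗λ⁻¹] ∈ H`. -/
def StrongHSLTAt (x₀ : X) (H : Subgroup (FundamentalGroup X x₀)) : Prop :=
  ∀ (x : X) (U : Set X), IsOpen U → x₀ ∈ U →
    ∃ V : Set X, IsOpen V ∧ x ∈ V ∧
      ∀ (β : Path x x), (∀ t, β t ∈ V) → ∀ (α : Path x₀ x),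
        ∃ lam : Path x₀ x₀, (∀ t, lam t ∈ U) ∧
          loopClass (α.trans (β.trans α.symm)) * (loopClass lam)⁻¹ ∈ H

/-- The whisker topology on the fundamental group at `x₀`: the subspace topology inherited
from the whisker topology on the universal path space. -/
def whiskerPi1 (x₀ : X) : TopologicalSpace (FundamentalGroup X x₀) :=
  TopologicalSpace.generateFrom
    {S | ∃ (x : X) (α : Path x₀ x) (U : Set X), IsOpen U ∧ x ∈ U ∧
      S = {g | ∃ lam : Path x x₀, (∀ t, lam t ∈ U) ∧ g = loopClass (α.trans lam)}}

/-- The lasso topology on the fundamental group at `x₀`: the subspace topology inherited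
from the lasso topology on the universal path space. -/
def lassoPi1 (x₀ : X) : TopologicalSpace (FundamentalGroup X x₀) :=
  TopologicalSpace.generateFrom
    {S | ∃ (x : X) (α : Path x₀ x) (𝒰 : Set (Set X)) (U : Set X),
      IsOpenCover 𝒰 ∧ U ∈ 𝒰 ∧ x ∈ U ∧
      S = {g | ∃ (γ : Path x x) (δ : Path x x₀), loopClass γ ∈ spanierGroupAt x 𝒰 ∧
            (∀ t, δ t ∈ U) ∧ g = loopClass ((α.trans γ).trans δ)}}

/-! The whisker topology is finer than the lasso topology, since every lasso basic set is a union
of whisker basic sets. Conversely, if `H` is whisker open, all loops in some neighbourhood `U` of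
`x₀` lie in `H`; the strong `H`-SLT property then gives every point `x` a neighbourhood `V` with
`[α β α⁻¹] ∈ H` for all loops `β` in `V`. By local path connectedness the path components of these
neighbourhoods form an open cover whose Spanier group lies in `H`, and a subgroup containing the
Spanier group of an open cover is lasso open. -/

open Set TopologicalSpace

def homClass {a b : X} (p : Path a b) : FundamentalGroupoid.mk a ⟶ FundamentalGroupoid.mk b :=
  ⟦p⟧

@[simp]
lemma homClass_trans {a b c : X} (p : Path a b) (q : Path b c) :
    homClass (p.trans q) = homClass p ≫ homClass q :=
  Path.Homotopic.Quotient.mk_trans p q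

@[simp]
lemma homClass_symm {a b : X} (p : Path a b) : homClass p.symm = inv (homClass p) := by
  rw [← Groupoid.inv_eq_inv]
  rfl

@[simp]
lemma homClass_refl (a : X) : homClass (Path.refl a) = 𝟙 (FundamentalGroupoid.mk a) := rfl

lemma loopClass_congr {x : X} {p q : Path x x} (h : homClass p = homClass q) :
    loopClass p = loopClass q :=
  h

lemma loopClass_trans {x : X} (p q : Path x x) :
    loopClass (p.trans q) = loopClass q * loopClass p :=
  rfl

lemma loopClass_surjective {x : X} : Function.Surjective (loopClass : Path x x → _) :=
  Path.Homotopic.Quotient.mk_surjective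

lemma Path.trans_apply_mem {a b c : X} {U : Set X} {p : Path a b} {q : Path b c}
    (hp : ∀ t, p t ∈ U) (hq : ∀ t, q t ∈ U) (t : I) : p.trans q t ∈ U := by
  rw [Path.trans_apply]
  split_ifs
  exacts [hp _, hq _]

lemma Path.symm_apply_mem {a b : X} {U : Set X} {p : Path a b} (hp : ∀ t, p t ∈ U) (t : I) :
    p.symm t ∈ U :=
  hp _

lemma loopClass_mem_spanierGroupAt {x : X} {𝒰 : Set (Set X)} {U : Set X} (hU : U ∈ 𝒰)
    {β : Path x x} (hβ : ∀ t, β t ∈ U) : loopClass β ∈ spanierGroupAt x 𝒰 :=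
  Subgroup.subset_closure ⟨x, .refl x, β, U, hU, hβ, loopClass_congr (by simp)⟩

lemma whiskerPi1_le_lassoPi1 (x₀ : X) : whiskerPi1 x₀ ≤ lassoPi1 x₀ := by
  refine le_generateFrom ?_
  rintro _ ⟨x, α, 𝒰, U, h𝒰, hU𝒰, hxU, rfl⟩
  refine (@isOpen_iff_forall_mem_open _ (whiskerPi1 x₀) _).2 ?_
  rintro _ ⟨γ, δ, hγ, hδ, rfl⟩
  refine ⟨_, ?_, isOpen_generateFrom_of_mem ⟨x, α.trans γ, U, h𝒰.1 U hU𝒰, hxU, rfl⟩,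
    ⟨δ, hδ, rfl⟩⟩
  rintro _ ⟨lam, hlam, rfl⟩
  -- `[α γ λ] = [α (γ λ δ⁻¹) δ]`, and `λ δ⁻¹` is a loop in `U`.
  refine ⟨γ.trans (lam.trans δ.symm), δ, ?_, hδ, loopClass_congr (by simp)⟩
  rw [loopClass_trans]
  exact mul_mem (loopClass_mem_spanierGroupAt hU𝒰 (Path.trans_apply_mem hlam
    (Path.symm_apply_mem hδ))) hγ

lemma exists_isOpen_forall_loopClass_mul_mem {x₀ : X} {S : Set (FundamentalGroup X x₀)}
    (hS : IsOpen[whiskerPi1 x₀] S) {g : FundamentalGroup X x₀} (hg : g ∈ S) :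
    ∃ U : Set X, IsOpen U ∧ x₀ ∈ U ∧
      ∀ μ : Path x₀ x₀, (∀ t, μ t ∈ U) → loopClass μ * g ∈ S := by
  induction hS generalizing g with
  | basic _ hs =>
    obtain ⟨x, α, U, hU, -, rfl⟩ := hs
    obtain ⟨lam, hlam, rfl⟩ := hg
    refine ⟨U, hU, lam.target ▸ hlam 1, fun μ hμ => ⟨lam.trans μ, ?_, ?_⟩⟩
    · exact Path.trans_apply_mem hlam hμ
    · exact loopClass_congr (by simp)
  | univ => exact ⟨univ, isOpen_univ, trivial, fun _ _ => trivial⟩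
  | inter s t _ _ ihs iht =>
    obtain ⟨U, hU, hx₀U, hUs⟩ := ihs hg.1
    obtain ⟨V, hV, hx₀V, hVt⟩ := iht hg.2
    exact ⟨U ∩ V, hU.inter hV, ⟨hx₀U, hx₀V⟩, fun μ hμ =>
      ⟨hUs μ fun t => (hμ t).1, hVt μ fun t => (hμ t).2⟩⟩
  | sUnion 𝔖 _ ih =>
    obtain ⟨s, hs, hgs⟩ := hg
    obtain ⟨U, hU, hx₀U, hUs⟩ := ih s hs hgs
    exact ⟨U, hU, hx₀U, fun μ hμ => ⟨s, hs, hUs μ hμ⟩⟩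

lemma isOpen_lassoPi1_of_spanierGroupAt_le {x₀ : X} {H : Subgroup (FundamentalGroup X x₀)}
    {𝒰 : Set (Set X)} (h𝒰 : IsOpenCover 𝒰) (hH : spanierGroupAt x₀ 𝒰 ≤ H) :
    IsOpen[lassoPi1 x₀] (H : Set (FundamentalGroup X x₀)) := by
  refine (@isOpen_iff_forall_mem_open _ (lassoPi1 x₀) _).2 ?_
  intro h hh
  obtain ⟨γ₀, rfl⟩ := loopClass_surjective h
  obtain ⟨U, hU𝒰, hx₀U⟩ := sUnion_eq_univ_iff.1 h𝒰.2 x₀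
  refine ⟨_, ?_, isOpen_generateFrom_of_mem ⟨x₀, γ₀, 𝒰, U, h𝒰, hU𝒰, hx₀U, rfl⟩,
    ⟨.refl x₀, .refl x₀, one_mem _, fun _ => hx₀U, loopClass_congr (by simp)⟩⟩
  rintro _ ⟨γ, δ, hγ, hδ, rfl⟩
  exact mul_mem (hH (loopClass_mem_spanierGroupAt hU𝒰 hδ)) (mul_mem (hH hγ) hh)

lemma StrongHSLTAt.exists_nhds_conj_mem {x₀ : X} {H : Subgroup (FundamentalGroup X x₀)}
    (hSLT : StrongHSLTAt x₀ H) {U : Set X} (hU : IsOpen U) (hx₀U : x₀ ∈ U)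
    (hUH : ∀ μ : Path x₀ x₀, (∀ t, μ t ∈ U) → loopClass μ ∈ H) (x : X) :
    ∃ V : Set X, IsOpen V ∧ x ∈ V ∧ ∀ β : Path x x, (∀ t, β t ∈ V) →
      ∀ α : Path x₀ x, loopClass (α.trans (β.trans α.symm)) ∈ H := by
  obtain ⟨V, hV, hxV, hVH⟩ := hSLT x U hU hx₀U
  refine ⟨V, hV, hxV, fun β hβ α => ?_⟩
  obtain ⟨lam, hlam, hmem⟩ := hVH β hβ α
  simpa only [inv_mul_cancel_right] using mul_mem hmem (hUH lam hlam)

lemma exists_isOpenCover_spanierGroupAt_le [LocallyPathConnectedSpace X] {x₀ : X}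
    {H : Subgroup (FundamentalGroup X x₀)}
    (h : ∀ x : X, ∃ V : Set X, IsOpen V ∧ x ∈ V ∧ ∀ β : Path x x, (∀ t, β t ∈ V) →
      ∀ α : Path x₀ x, loopClass (α.trans (β.trans α.symm)) ∈ H) :
    ∃ 𝒰 : Set (Set X), IsOpenCover 𝒰 ∧ spanierGroupAt x₀ 𝒰 ≤ H := by
  choose V hV hxV hVH using h
  refine ⟨range fun x => pathComponentIn (V x) x, ⟨?_, ?_⟩, ?_⟩
  · rintro _ ⟨x, rfl⟩
    exact (hV x).pathComponentIn x
  · exact sUnion_eq_univ_iff.2 fun x => ⟨_, ⟨x, rfl⟩, mem_pathComponentIn_self (hxV x)⟩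
  · rw [spanierGroupAt, Subgroup.closure_le]
    rintro _ ⟨y, α, β, _, ⟨z, rfl⟩, hβ, rfl⟩
    -- Conjugating along a path `p` from `z` to `y` inside `V z` moves `β` to a loop at `z`.
    obtain ⟨p, hp⟩ : JoinedIn (V z) z y := β.source ▸ hβ 0
    have hβV : ∀ t, β t ∈ V z := fun t => pathComponentIn_subset (hβ t)
    rw [SetLike.mem_coe]
    convert hVH z (p.trans (β.trans p.symm))
      (Path.trans_apply_mem hp (Path.trans_apply_mem hβV (Path.symm_apply_mem hp)))
      (α.trans p.symm) using 1
    exact loopClass_congr (by simp)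

theorem whisker_open_iff_lasso_open [LocallyPathConnectedSpace X]
    (x₀ : X) (H : Subgroup (FundamentalGroup X x₀)) (hSLT : StrongHSLTAt x₀ H) :
    IsOpen[whiskerPi1 x₀] (H : Set (FundamentalGroup X x₀)) ↔
      IsOpen[lassoPi1 x₀] (H : Set (FundamentalGroup X x₀)) := by
  refine ⟨fun hW => ?_, fun hL => TopologicalSpace.le_def.1 (whiskerPi1_le_lassoPi1 x₀) _ hL⟩
  obtain ⟨U, hU, hx₀U, hUH⟩ := exists_isOpen_forall_loopClass_mul_mem hW (one_mem H)
  obtain ⟨𝒰, h𝒰, hle⟩ := exists_isOpenCover_spanierGroupAt_le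
    (hSLT.exists_nhds_conj_mem hU hx₀U fun μ hμ => mul_one (loopClass μ) ▸ hUH μ hμ)
  exact isOpen_lassoPi1_of_spanierGroupAt_le h𝒰 hle

end
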